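/- arXiv:1706.04833 — 6 statements merged into one kernel-verified Lean document; each statement's English description precedes it below -/
import Mathlib

section
/- If 0 < α < 1 and f is holomorphic on the unit disk with sup_{z∈D} (1-|z|²)^α |f'(z)| < ∞, then f is bounded on the unit disk. -/
open Metric Set

/-! The derivative of `f` grows at most like `(1 - |w|)^(-α)` near the boundary, which is
integrable along each radius when `α < 1`. Comparing `t ↦ f (t z) - f 0` on `[0, 1]` with the
primitive `C (1 - (1 - t)^(1-α)) / (1 - α)` of `C (1 - t)^(-α)` gives
`|f z - f 0| ≤ C / (1 - α)` uniformly in `z`. -/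

theorem le_mul_rpow_neg_of_rpow_mul_le {α s r x C : ℝ} (hα : 0 ≤ α) (hs : 0 < s) (hsr : s ≤ r)
    (hx : 0 ≤ x) (h : r ^ α * x ≤ C) : x ≤ C * s ^ (-α) := by
  have hsα : 0 < s ^ α := Real.rpow_pos_of_pos hs α
  rw [Real.rpow_neg hs.le, ← div_eq_mul_inv, le_div_iff₀ hsα, mul_comm]
  exact (mul_le_mul_of_nonneg_right (Real.rpow_le_rpow hs.le hsr hα) hx).trans h

theorem hasDerivAt_one_sub_rpow_primitive {α t : ℝ} (hα : α < 1) (ht : t < 1) :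
    HasDerivAt (fun s : ℝ => (1 - (1 - s) ^ (1 - α)) / (1 - α)) ((1 - t) ^ (-α)) t := by
  have hα' : 1 - α ≠ 0 := by linarith
  have h := (((hasDerivAt_id t).const_sub 1).rpow_const (p := 1 - α)
    (Or.inl (by simp; linarith))).const_sub 1 |>.div_const (1 - α)
  refine h.congr_deriv ?_
  rw [id, sub_sub_cancel_left]
  field_simp

theorem norm_sub_le_of_norm_deriv_le_rpow_neg {E : Type*} [NormedAddCommGroup E]
    [NormedSpace ℝ E] {g g' : ℝ → E} {α C : ℝ} (hα : α < 1) (hg : ContinuousOn g (Icc 0 1))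
    (hg' : ∀ t ∈ Ico (0 : ℝ) 1, HasDerivAt g (g' t) t)
    (bound : ∀ t ∈ Ico (0 : ℝ) 1, ‖g' t‖ ≤ C * (1 - t) ^ (-α)) :
    ‖g 1 - g 0‖ ≤ C / (1 - α) := by
  let B : ℝ → ℝ := fun t => C * ((1 - (1 - t) ^ (1 - α)) / (1 - α))
  have hB : ContinuousOn B (Icc 0 1) := by
    have := Real.continuous_rpow_const (q := 1 - α) (by linarith)
    fun_prop
  have hB' : ∀ t ∈ Ico (0 : ℝ) 1, HasDerivWithinAt B (C * (1 - t) ^ (-α)) (Ici t) t :=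
    fun t ht => ((hasDerivAt_one_sub_rpow_primitive hα ht.2).const_mul C).hasDerivWithinAt
  have key := image_norm_le_of_norm_deriv_right_le_deriv_boundary' (f := fun t => g t - g 0)
    (hg.sub continuousOn_const) (fun t ht => ((hg' t ht).sub_const (g 0)).hasDerivWithinAt)
    (by simp [B]) hB hB' bound (right_mem_Icc.2 zero_le_one)
  have h0 : (0 : ℝ) ^ (1 - α) = 0 := Real.zero_rpow (by linarith)
  simpa [B, h0, div_eq_mul_inv] using key

theorem hasDerivAt_comp_ofReal_mul {f : ℂ → ℂ} {z : ℂ} {t : ℝ}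
    (hf : DifferentiableAt ℂ f (t * z)) :
    HasDerivAt (fun s : ℝ => f (s * z)) (deriv f (t * z) * z) t := by
  simpa using (hf.hasDerivAt.comp (t : ℂ) ((hasDerivAt_id _).mul_const z)).comp_ofReal

theorem one_sub_le_one_sub_norm_ofReal_mul_sq {z : ℂ} (hz : ‖z‖ ≤ 1) {t : ℝ}
    (ht : t ∈ Icc (0 : ℝ) 1) : 1 - t ≤ 1 - ‖(t : ℂ) * z‖ ^ 2 := by
  have hle : t * ‖z‖ ≤ t := mul_le_of_le_one_right ht.1 hz
  rw [norm_mul, Complex.norm_real, Real.norm_of_nonneg ht.1]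
  nlinarith [mul_nonneg ht.1 (norm_nonneg z), ht.2]

theorem ofReal_mul_mem_ball_zero_one {z : ℂ} (hz : z ∈ ball (0 : ℂ) 1) {t : ℝ}
    (ht : t ∈ Icc (0 : ℝ) 1) : (t : ℂ) * z ∈ ball (0 : ℂ) 1 := by
  simpa [Complex.real_smul] using
    (convex_ball (0 : ℂ) 1).smul_mem_of_zero_mem (mem_ball_self one_pos) hz ht

theorem norm_sub_le_of_weighted_norm_deriv_le {f : ℂ → ℂ} {α C : ℝ} (hα0 : 0 ≤ α) (hα1 : α < 1)
    (hf : DifferentiableOn ℂ f (ball (0 : ℂ) 1))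
    (hC : ∀ w ∈ ball (0 : ℂ) 1, (1 - ‖w‖ ^ 2) ^ α * ‖deriv f w‖ ≤ C)
    {z : ℂ} (hz : z ∈ ball (0 : ℂ) 1) : ‖f z - f 0‖ ≤ C / (1 - α) := by
  have hz1 : ‖z‖ < 1 := mem_ball_zero_iff.1 hz
  have hdiff : ∀ t ∈ Icc (0 : ℝ) 1, DifferentiableAt ℂ f (t * z) := fun t ht =>
    hf.differentiableAt (isOpen_ball.mem_nhds (ofReal_mul_mem_ball_zero_one hz ht))
  have hbound : ∀ t ∈ Ico (0 : ℝ) 1, ‖deriv f (t * z) * z‖ ≤ C * (1 - t) ^ (-α) := by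
    intro t ht
    have ht' := Ico_subset_Icc_self ht
    rw [norm_mul]
    refine (mul_le_of_le_one_right (norm_nonneg _) hz1.le).trans ?_
    exact le_mul_rpow_neg_of_rpow_mul_le hα0 (sub_pos.2 ht.2)
      (one_sub_le_one_sub_norm_ofReal_mul_sq hz1.le ht') (norm_nonneg _)
      (hC _ (ofReal_mul_mem_ball_zero_one hz ht'))
  simpa using norm_sub_le_of_norm_deriv_le_rpow_neg (g := fun t : ℝ => f (t * z)) hα1
    (fun t ht => (hasDerivAt_comp_ofReal_mul (hdiff t ht)).continuousAt.continuousWithinAt)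
    (fun t ht => hasDerivAt_comp_ofReal_mul (hdiff t (Ico_subset_Icc_self ht))) hbound

/-- If `0 < α < 1` and `f ∈ B_α`, then `f` is bounded on the unit disk. -/
theorem bloch_type_subset_Hinfty (α : ℝ) (hα0 : 0 < α) (hα1 : α < 1)
    (f : ℂ → ℂ) (hf : DifferentiableOn ℂ f (ball (0 : ℂ) 1))
    (hfα : ∃ C : ℝ, ∀ z ∈ ball (0 : ℂ) 1,
      (1 - ‖z‖ ^ 2) ^ α * ‖deriv f z‖ ≤ C) :
    ∃ C : ℝ, ∀ z ∈ ball (0 : ℂ) 1, ‖f z‖ ≤ C := by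
  obtain ⟨C, hC⟩ := hfα
  refine ⟨‖f 0‖ + C / (1 - α), fun z hz => ?_⟩
  have hradial := norm_sub_le_of_weighted_norm_deriv_le hα0.le hα1 hf hC hz
  linarith [norm_le_norm_add_norm_sub' (f z) (f 0)]
end

section
/- Let φ be a holomorphic self-map of the unit disk with φ(0) = 0 and 0 < |φ'(0)| < 1, and suppose there exist α > 0, M > 0, and a nonnegative integer m such that (1-|z|²)^α |φ'(z)| ≤ M (1-|φ(z)|²)^α for all z ∈ D, and (1-|φ_m(z)|²)^α |φ'(φ_m(z))| ≤ |φ'(0)| · (1-|φ_{m+1}(z)|²)^α for all z ∈ D, where φ_k denotes the k-th iterate of φ. Then for every integer k > m and every z ∈ D, (1-|z|²)^α |φ_k'(z)| ≤ M^m |φ'(0)|^{k-m} (1-|φ_k(z)|²)^α. -/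
/-!
The weight `w z = (1 - ‖z‖ ^ 2) ^ α` turns the chain rule into a submultiplicative estimate: if
`w z * ‖f' z‖ ≤ a * w (f z)` and `w (f z) * ‖g' (f z)‖ ≤ b * w (g (f z))`, then
`w z * ‖(g ∘ f)' z‖ ≤ a * b * w (g (f z))`. Iterating the first hypothesis on the disk bounds
`φ_m` with constant `M ^ m`; condition (A) says that `φ` has constant `|φ'(0)|` on the
`φ`-invariant set `φ_m(D)`, which bounds `φ_{k-m}` there by `|φ'(0)| ^ (k - m)`. Composing the
two estimates through `φ_k = φ_{k-m} ∘ φ_m` gives the claim.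
-/

open Metric Set

section WeightedDeriv

variable {𝕜 : Type*} [NontriviallyNormedField 𝕜]

theorem weighted_norm_deriv_comp_le {w : 𝕜 → ℝ} {f g : 𝕜 → 𝕜} {z : 𝕜} {a b : ℝ}
    (ha : 0 ≤ a) (hg : DifferentiableAt 𝕜 g (f z)) (hf : DifferentiableAt 𝕜 f z)
    (hfz : w z * ‖deriv f z‖ ≤ a * w (f z))
    (hgfz : w (f z) * ‖deriv g (f z)‖ ≤ b * w (g (f z))) :
    w z * ‖deriv (g ∘ f) z‖ ≤ a * b * w (g (f z)) := by
  rw [deriv_comp z hg hf, norm_mul]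
  calc w z * (‖deriv g (f z)‖ * ‖deriv f z‖)
      = ‖deriv g (f z)‖ * (w z * ‖deriv f z‖) := by ring
    _ ≤ ‖deriv g (f z)‖ * (a * w (f z)) := by gcongr
    _ = a * (w (f z) * ‖deriv g (f z)‖) := by ring
    _ ≤ a * (b * w (g (f z))) := by gcongr
    _ = a * b * w (g (f z)) := by ring

variable {φ : 𝕜 → 𝕜} {t : Set 𝕜}

theorem differentiableAt_iterate_of_mapsTo (ht : MapsTo φ t t)
    (hφ : ∀ u ∈ t, DifferentiableAt 𝕜 φ u) (n : ℕ) :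
    ∀ u ∈ t, DifferentiableAt 𝕜 φ^[n] u := by
  induction n with
  | zero => exact fun u _ => differentiableAt_id
  | succ n ih =>
    intro u hu
    rw [Function.iterate_succ]
    exact (ih (φ u) (ht hu)).comp u (hφ u hu)

theorem weighted_norm_deriv_iterate_le {w : 𝕜 → ℝ} {c : ℝ} (hc : 0 ≤ c) (ht : MapsTo φ t t)
    (hφ : ∀ u ∈ t, DifferentiableAt 𝕜 φ u)
    (hstep : ∀ u ∈ t, w u * ‖deriv φ u‖ ≤ c * w (φ u)) (n : ℕ) :
    ∀ u ∈ t, w u * ‖deriv φ^[n] u‖ ≤ c ^ n * w (φ^[n] u) := by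
  induction n with
  | zero => simp
  | succ n ih =>
    intro u hu
    rw [Function.iterate_succ, pow_succ']
    exact weighted_norm_deriv_comp_le hc (differentiableAt_iterate_of_mapsTo ht hφ n _ (ht hu))
      (hφ u hu) (hstep u hu) (ih (φ u) (ht hu))

end WeightedDeriv

theorem mapsTo_image_iterate {α : Type*} {φ : α → α} {s : Set α} (hs : MapsTo φ s s) (m : ℕ) :
    MapsTo φ (φ^[m] '' s) (φ^[m] '' s) := by
  rintro _ ⟨z, hz, rfl⟩
  exact ⟨φ z, hs hz, (Function.Commute.self_iterate φ m z).symm⟩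

theorem iterate_deriv_estimate_general (φ : ℂ → ℂ)
    (hφmap : Set.MapsTo φ (ball (0 : ℂ) 1) (ball (0 : ℂ) 1))
    (hφ : DifferentiableOn ℂ φ (ball (0 : ℂ) 1))
    (α M : ℝ) (hM : 0 < M) (m : ℕ)
    (hbdd : ∀ z ∈ ball (0 : ℂ) 1,
      (1 - ‖z‖ ^ 2) ^ α * ‖deriv φ z‖ ≤
        M * (1 - ‖φ z‖ ^ 2) ^ α)
    (hA : ∀ z ∈ ball (0 : ℂ) 1,
      (1 - ‖φ^[m] z‖ ^ 2) ^ α * ‖deriv φ (φ^[m] z)‖ ≤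
        ‖deriv φ 0‖ * (1 - ‖φ^[m + 1] z‖ ^ 2) ^ α) :
    ∀ k : ℕ, m < k → ∀ z ∈ ball (0 : ℂ) 1,
      (1 - ‖z‖ ^ 2) ^ α * ‖deriv (φ^[k]) z‖ ≤
        M ^ m * ‖deriv φ 0‖ ^ (k - m) *
          (1 - ‖φ^[k] z‖ ^ 2) ^ α := by
  intro k hmk z hz
  have hdiff : ∀ u ∈ ball (0 : ℂ) 1, DifferentiableAt ℂ φ u :=
    fun u hu => hφ.differentiableAt (isOpen_ball.mem_nhds hu)
  have hinv := mapsTo_image_iterate hφmap m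
  have hdiff_image : ∀ u ∈ φ^[m] '' ball (0 : ℂ) 1, DifferentiableAt ℂ φ u := by
    rintro _ ⟨y, hy, rfl⟩
    exact hdiff _ (hφmap.iterate m hy)
  have hA_image : ∀ u ∈ φ^[m] '' ball (0 : ℂ) 1,
      (1 - ‖u‖ ^ 2) ^ α * ‖deriv φ u‖ ≤ ‖deriv φ 0‖ * (1 - ‖φ u‖ ^ 2) ^ α := by
    rintro _ ⟨y, hy, rfl⟩
    simpa only [Function.iterate_succ_apply'] using hA y hy
  have hsplit : φ^[k] = φ^[k - m] ∘ φ^[m] := by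
    rw [← Function.iterate_add, Nat.sub_add_cancel hmk.le]
  rw [hsplit]
  exact weighted_norm_deriv_comp_le (w := fun u => (1 - ‖u‖ ^ 2) ^ α) (pow_nonneg hM.le m)
    (differentiableAt_iterate_of_mapsTo hinv hdiff_image (k - m) _ (mem_image_of_mem _ hz))
    (differentiableAt_iterate_of_mapsTo hφmap hdiff m z hz)
    (weighted_norm_deriv_iterate_le hM.le hφmap hdiff hbdd m z hz)
    (weighted_norm_deriv_iterate_le (norm_nonneg _) hinv hdiff_image hA_image (k - m) _
      (mem_image_of_mem _ hz))

/-- Iterated derivative estimate under condition (A) and boundedness of `C_φ` on `B_α`. -/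
theorem iterate_deriv_estimate (φ : ℂ → ℂ)
    (hφmap : Set.MapsTo φ (ball (0 : ℂ) 1) (ball (0 : ℂ) 1))
    (hφ : DifferentiableOn ℂ φ (ball (0 : ℂ) 1))
    (hφ0 : φ 0 = 0)
    (hd0 : 0 < ‖deriv φ 0‖) (hd1 : ‖deriv φ 0‖ < 1)
    (α M : ℝ) (hα : 0 < α) (hM : 0 < M) (m : ℕ)
    (hbdd : ∀ z ∈ ball (0 : ℂ) 1,
      (1 - ‖z‖ ^ 2) ^ α * ‖deriv φ z‖ ≤
        M * (1 - ‖φ z‖ ^ 2) ^ α)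
    (hA : ∀ z ∈ ball (0 : ℂ) 1,
      (1 - ‖φ^[m] z‖ ^ 2) ^ α * ‖deriv φ (φ^[m] z)‖ ≤
        ‖deriv φ 0‖ * (1 - ‖φ^[m + 1] z‖ ^ 2) ^ α) :
    ∀ k : ℕ, m < k → ∀ z ∈ ball (0 : ℂ) 1,
      (1 - ‖z‖ ^ 2) ^ α * ‖deriv (φ^[k]) z‖ ≤
        M ^ m * ‖deriv φ 0‖ ^ (k - m) *
          (1 - ‖φ^[k] z‖ ^ 2) ^ α :=
  iterate_deriv_estimate_general φ hφmap hφ α M hM m hbdd hA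
end

section
/- Let φ be a holomorphic self-map of the unit disk with φ(0) = 0 and 0 < |φ'(0)| < 1, satisfying the hypotheses of Königs so that the normalized iterates σ_k(z) = φ_k(z)/φ'(0)^k converge locally uniformly to the Königs function σ. If there exist α > 0, M > 0, and a nonnegative integer m with (1-|z|²)^α|φ'(z)| ≤ M(1-|φ(z)|²)^α for all z, and (1-|φ_m(z)|²)^α|φ'(φ_m(z))| ≤ |φ'(0)|(1-|φ_{m+1}(z)|²)^α for all z, then σ ∈ B_α, with (1-|z|²)^α |σ'(z)| ≤ M^m / |φ'(0)|^m for all z ∈ D. -/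
open Metric Finset Filter Function Topology

/-!
By the chain rule, `σ_k' = (∏_{j<k} φ'(φ_j)) / φ'(0)^k`, and by Weierstrass these derivatives
converge locally uniformly to `σ'`. Carry the weight `(1 - |z|²)^α` along the orbit of `z`:
each of the first `m` factors `φ'(φ_j z)` costs at most `M` by the first hypothesis, each later
factor at most `|φ'(0)|` by the second, and what remains is a weight `(1 - |φ_k z|²)^α ≤ 1`.
Hence the weighted `|σ_k'(z)|` is at most `M^m |φ'(0)|^(k-m) / |φ'(0)|^k` for `k ≥ m`, and the
bound passes to the limit.
-/

section Orbit

variable {X : Type*} {f : X → X} {s : Set X} {w d : X → ℝ}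

theorem mul_prod_iterate_le_pow_mul {c : ℝ} (hs : Set.MapsTo f s s) (hc : 0 ≤ c)
    (hd : ∀ x, 0 ≤ d x) (h : ∀ x ∈ s, w x * d x ≤ c * w (f x)) (n : ℕ) {x : X} (hx : x ∈ s) :
    w x * ∏ j ∈ range n, d (f^[j] x) ≤ c ^ n * w (f^[n] x) := by
  induction n with
  | zero => simp
  | succ n ih =>
    calc w x * ∏ j ∈ range (n + 1), d (f^[j] x)
        = (w x * ∏ j ∈ range n, d (f^[j] x)) * d (f^[n] x) := by
          rw [prod_range_succ, mul_assoc]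
      _ ≤ c ^ n * w (f^[n] x) * d (f^[n] x) := mul_le_mul_of_nonneg_right ih (hd _)
      _ = c ^ n * (w (f^[n] x) * d (f^[n] x)) := mul_assoc ..
      _ ≤ c ^ n * (c * w (f^[n + 1] x)) := by
          rw [iterate_succ_apply']
          exact mul_le_mul_of_nonneg_left (h _ (hs.iterate n hx)) (pow_nonneg hc n)
      _ = c ^ (n + 1) * w (f^[n + 1] x) := by ring

theorem mul_prod_iterate_add_le {c₁ c₂ : ℝ} (hs : Set.MapsTo f s s) (hc₁ : 0 ≤ c₁)
    (hc₂ : 0 ≤ c₂) (hd : ∀ x, 0 ≤ d x) {m : ℕ} (h₁ : ∀ x ∈ s, w x * d x ≤ c₁ * w (f x))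
    (h₂ : ∀ x ∈ s, w (f^[m] x) * d (f^[m] x) ≤ c₂ * w (f^[m] (f x))) (t : ℕ) {x : X}
    (hx : x ∈ s) :
    w x * ∏ j ∈ range (m + t), d (f^[j] x) ≤ c₁ ^ m * c₂ ^ t * w (f^[m + t] x) := by
  simp only [prod_range_add, iterate_add_apply]
  calc w x * ((∏ j ∈ range m, d (f^[j] x)) * ∏ j ∈ range t, d (f^[m] (f^[j] x)))
      = (w x * ∏ j ∈ range m, d (f^[j] x)) * ∏ j ∈ range t, d (f^[m] (f^[j] x)) :=
        (mul_assoc ..).symm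
    _ ≤ c₁ ^ m * w (f^[m] x) * ∏ j ∈ range t, d (f^[m] (f^[j] x)) :=
        mul_le_mul_of_nonneg_right (mul_prod_iterate_le_pow_mul hs hc₁ hd h₁ m hx)
          (prod_nonneg fun _ _ ↦ hd _)
    _ = c₁ ^ m * (w (f^[m] x) * ∏ j ∈ range t, d (f^[m] (f^[j] x))) := mul_assoc ..
    _ ≤ c₁ ^ m * (c₂ ^ t * w (f^[m] (f^[t] x))) :=
        mul_le_mul_of_nonneg_left (mul_prod_iterate_le_pow_mul (w := w ∘ f^[m])
          (d := d ∘ f^[m]) hs hc₂ (fun _ ↦ hd _) h₂ t hx) (pow_nonneg hc₁ m)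
    _ = c₁ ^ m * c₂ ^ t * w (f^[m] (f^[t] x)) := (mul_assoc ..).symm

end Orbit

theorem hasDerivAt_iterate_of_mapsTo {𝕜 : Type*} [NontriviallyNormedField 𝕜] {f f' : 𝕜 → 𝕜}
    {s : Set 𝕜} (hs : Set.MapsTo f s s) (hf : ∀ x ∈ s, HasDerivAt f (f' x) x) (n : ℕ) {x : 𝕜}
    (hx : x ∈ s) : HasDerivAt f^[n] (∏ j ∈ range n, f' (f^[j] x)) x := by
  induction n with
  | zero => simpa using hasDerivAt_id x
  | succ n ih =>
    rw [iterate_succ', prod_range_succ, mul_comm]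
    exact (hf _ (hs.iterate n hx)).comp x ih

theorem rpow_one_sub_norm_sq_le_one {E : Type*} [SeminormedAddCommGroup E] {α : ℝ}
    (hα : 0 ≤ α) {z : E} (hz : z ∈ ball (0 : E) 1) : (1 - ‖z‖ ^ 2) ^ α ≤ 1 := by
  have hz' : ‖z‖ < 1 := mem_ball_zero_iff.mp hz
  exact Real.rpow_le_one (by nlinarith [norm_nonneg z]) (by nlinarith [norm_nonneg z]) hα

theorem koenigs_in_bloch_type_general (φ σ : ℂ → ℂ)
    (hφmap : Set.MapsTo φ (ball (0 : ℂ) 1) (ball (0 : ℂ) 1))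
    (hφ : DifferentiableOn ℂ φ (ball (0 : ℂ) 1))
    (hd0 : 0 < ‖deriv φ 0‖)
    (hkoenigs : TendstoLocallyUniformlyOn
      (fun (k : ℕ) (z : ℂ) => φ^[k] z / (deriv φ 0) ^ k) σ
      Filter.atTop (ball (0 : ℂ) 1))
    (α M : ℝ) (hα : 0 < α) (hM : 0 < M) (m : ℕ)
    (hbdd : ∀ z ∈ ball (0 : ℂ) 1,
      (1 - ‖z‖ ^ 2) ^ α * ‖deriv φ z‖ ≤
        M * (1 - ‖φ z‖ ^ 2) ^ α)
    (hA : ∀ z ∈ ball (0 : ℂ) 1,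
      (1 - ‖φ^[m] z‖ ^ 2) ^ α * ‖deriv φ (φ^[m] z)‖ ≤
        ‖deriv φ 0‖ * (1 - ‖φ^[m + 1] z‖ ^ 2) ^ α) :
    ∀ z ∈ ball (0 : ℂ) 1,
      (1 - ‖z‖ ^ 2) ^ α * ‖deriv σ z‖ ≤
        M ^ m / ‖deriv φ 0‖ ^ m := by
  intro z hz
  have hσk (k : ℕ) (w : ℂ) (hw : w ∈ ball (0 : ℂ) 1) :
      HasDerivAt (fun w ↦ φ^[k] w / deriv φ 0 ^ k)
        ((∏ j ∈ range k, deriv φ (φ^[j] w)) / deriv φ 0 ^ k) w :=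
    (hasDerivAt_iterate_of_mapsTo hφmap
      (fun x hx ↦ (hφ.differentiableAt (isOpen_ball.mem_nhds hx)).hasDerivAt) k hw).div_const _
  have hlim : Tendsto (fun k ↦ deriv (fun w ↦ φ^[k] w / deriv φ 0 ^ k) z) atTop
      (𝓝 (deriv σ z)) :=
    (hkoenigs.deriv (.of_forall fun k w hw ↦ (hσk k w hw).differentiableAt.differentiableWithinAt)
      isOpen_ball).tendsto_at hz
  refine le_of_tendsto (hlim.norm.const_mul _) ?_
  filter_upwards [eventually_ge_atTop m] with k hk
  obtain ⟨t, rfl⟩ := Nat.exists_eq_add_of_le hk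
  rw [(hσk _ z hz).deriv, norm_div, norm_prod, norm_pow, ← mul_div_assoc,
    div_le_div_iff₀ (by positivity) (by positivity)]
  calc (1 - ‖z‖ ^ 2) ^ α * (∏ j ∈ range (m + t), ‖deriv φ (φ^[j] z)‖) * ‖deriv φ 0‖ ^ m
      ≤ M ^ m * ‖deriv φ 0‖ ^ t * (1 - ‖φ^[m + t] z‖ ^ 2) ^ α * ‖deriv φ 0‖ ^ m := by
        gcongr ?_ * _
        -- `hA` serves as `h₂`: `φ^[m + 1] z` unfolds to `φ^[m] (φ z)`.
        exact mul_prod_iterate_add_le hφmap hM.le hd0.le (fun _ ↦ norm_nonneg _) hbdd hA t hz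
    _ ≤ M ^ m * ‖deriv φ 0‖ ^ t * 1 * ‖deriv φ 0‖ ^ m := by
        gcongr
        exact rpow_one_sub_norm_sq_le_one hα.le (hφmap.iterate _ hz)
    _ = M ^ m * ‖deriv φ 0‖ ^ (m + t) := by ring

/-- Under boundedness of `C_φ` on `B_α` and condition (A), the Königs function `σ`
belongs to `B_α` with seminorm at most `M^m / |φ'(0)|^m`. -/
theorem koenigs_in_bloch_type (φ σ : ℂ → ℂ)
    (hφmap : Set.MapsTo φ (ball (0 : ℂ) 1) (ball (0 : ℂ) 1))
    (hφ : DifferentiableOn ℂ φ (ball (0 : ℂ) 1))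
    (hφ0 : φ 0 = 0)
    (hd0 : 0 < ‖deriv φ 0‖) (hd1 : ‖deriv φ 0‖ < 1)
    (hσ : DifferentiableOn ℂ σ (ball (0 : ℂ) 1))
    (hkoenigs : TendstoLocallyUniformlyOn
      (fun (k : ℕ) (z : ℂ) => φ^[k] z / (deriv φ 0) ^ k) σ
      Filter.atTop (ball (0 : ℂ) 1))
    (α M : ℝ) (hα : 0 < α) (hM : 0 < M) (m : ℕ)
    (hbdd : ∀ z ∈ ball (0 : ℂ) 1,
      (1 - ‖z‖ ^ 2) ^ α * ‖deriv φ z‖ ≤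
        M * (1 - ‖φ z‖ ^ 2) ^ α)
    (hA : ∀ z ∈ ball (0 : ℂ) 1,
      (1 - ‖φ^[m] z‖ ^ 2) ^ α * ‖deriv φ (φ^[m] z)‖ ≤
        ‖deriv φ 0‖ * (1 - ‖φ^[m + 1] z‖ ^ 2) ^ α) :
    ∀ z ∈ ball (0 : ℂ) 1,
      (1 - ‖z‖ ^ 2) ^ α * ‖deriv σ z‖ ≤
        M ^ m / ‖deriv φ 0‖ ^ m :=
  koenigs_in_bloch_type_general φ σ hφmap hφ hd0 hkoenigs α M hα hM m hbdd hA
end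

section
/- Let φ be a holomorphic self-map of the unit disk with φ(0) = 0 and 0 < |φ'(0)| < 1, and suppose (1-|z|²)·log(2/(1-|z|))·|φ'(z)| ≤ |φ'(0)|·(1-|φ(z)|²)·log(2/(1-|φ(z)|)) for all z ∈ D. Then for every positive integer k and every z ∈ D, (1-|z|²)·|φ_k'(z)|·log(2/(1-|z|)) ≤ 4|φ'(0)|^k, where φ_k is the k-th iterate of φ. -/
/-!
The weight `w z = (1 - |z|²) log (2 / (1 - |z|))` makes the hypothesis a contraction estimate
`w z |φ'(z)| ≤ |φ'(0)| w (φ z)`. By the chain rule it iterates to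
`w z |φ_k'(z)| ≤ |φ'(0)|^k w (φ_k z)`, and `w ≤ 4` on the disk because `1 - |w|² ≤ 2 (1 - |w|)`
and `log x ≤ x`.
-/

open Metric

theorem one_sub_sq_mul_log_two_div_one_sub_le_four {a : ℝ} (ha₀ : 0 ≤ a) (ha₁ : a < 1) :
    (1 - a ^ 2) * Real.log (2 / (1 - a)) ≤ 4 := by
  have hpos : 0 < 1 - a := by linarith
  have hlog_le : Real.log (2 / (1 - a)) ≤ 2 / (1 - a) :=
    (Real.log_le_sub_one_of_pos (by positivity)).trans (by linarith)
  have hlog_nonneg : 0 ≤ Real.log (2 / (1 - a)) :=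
    Real.log_nonneg (by rw [le_div_iff₀ hpos]; linarith)
  calc (1 - a ^ 2) * Real.log (2 / (1 - a)) ≤ 2 * (1 - a) * (2 / (1 - a)) :=
        mul_le_mul (by nlinarith) hlog_le hlog_nonneg (by positivity)
    _ = 4 := by field_simp; ring

section WeightedDerivative

variable {𝕜 : Type*} [NontriviallyNormedField 𝕜] {f : 𝕜 → 𝕜} {s : Set 𝕜}

theorem deriv_iterate_succ_of_mapsTo (hs : IsOpen s) (hf : DifferentiableOn 𝕜 f s)
    (hmaps : Set.MapsTo f s s) (k : ℕ) {z : 𝕜} (hz : z ∈ s) :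
    deriv f^[k + 1] z = deriv f (f^[k] z) * deriv f^[k] z := by
  rw [Function.iterate_succ']
  exact deriv_comp z (hf.differentiableAt (hs.mem_nhds (hmaps.iterate k hz)))
    ((hf.iterate hmaps k).differentiableAt (hs.mem_nhds hz))

theorem weighted_norm_deriv_iterate_le_s7 (hs : IsOpen s) (hf : DifferentiableOn 𝕜 f s)
    (hmaps : Set.MapsTo f s s) (w : 𝕜 → ℝ) {c : ℝ} (hc : 0 ≤ c)
    (hw : ∀ z ∈ s, w z * ‖deriv f z‖ ≤ c * w (f z)) (k : ℕ) {z : 𝕜} (hz : z ∈ s) :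
    w z * ‖deriv f^[k] z‖ ≤ c ^ k * w (f^[k] z) := by
  induction k with
  | zero => simp
  | succ k ih =>
    rw [deriv_iterate_succ_of_mapsTo hs hf hmaps k hz, norm_mul, Function.iterate_succ_apply']
    calc w z * (‖deriv f (f^[k] z)‖ * ‖deriv f^[k] z‖)
        = w z * ‖deriv f^[k] z‖ * ‖deriv f (f^[k] z)‖ := by ring
      _ ≤ c ^ k * w (f^[k] z) * ‖deriv f (f^[k] z)‖ := by gcongr
      _ = c ^ k * (w (f^[k] z) * ‖deriv f (f^[k] z)‖) := by ring
      _ ≤ c ^ k * (c * w (f (f^[k] z))) :=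
          mul_le_mul_of_nonneg_left (hw _ (hmaps.iterate k hz)) (pow_nonneg hc k)
      _ = c ^ (k + 1) * w (f (f^[k] z)) := by ring

end WeightedDerivative

theorem iterate_deriv_log_estimate_general (φ : ℂ → ℂ)
    (hφmap : Set.MapsTo φ (ball (0 : ℂ) 1) (ball (0 : ℂ) 1))
    (hφ : DifferentiableOn ℂ φ (ball (0 : ℂ) 1))
    (hcond : ∀ z ∈ ball (0 : ℂ) 1,
      (1 - ‖z‖ ^ 2) * Real.log (2 / (1 - ‖z‖)) *
        ‖deriv φ z‖ ≤
      ‖deriv φ 0‖ * ((1 - ‖φ z‖ ^ 2) *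
        Real.log (2 / (1 - ‖φ z‖)))) :
    ∀ k : ℕ, 0 < k → ∀ z ∈ ball (0 : ℂ) 1,
      (1 - ‖z‖ ^ 2) * ‖deriv (φ^[k]) z‖ *
        Real.log (2 / (1 - ‖z‖)) ≤
      4 * ‖deriv φ 0‖ ^ k := by
  intro k _ z hz
  have hiter := weighted_norm_deriv_iterate_le_s7 isOpen_ball hφ hφmap
    (fun z ↦ (1 - ‖z‖ ^ 2) * Real.log (2 / (1 - ‖z‖))) (norm_nonneg _) hcond k hz
  have hweight := one_sub_sq_mul_log_two_div_one_sub_le_four (norm_nonneg (φ^[k] z))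
    (mem_ball_zero_iff.mp (hφmap.iterate k hz))
  calc (1 - ‖z‖ ^ 2) * ‖deriv (φ^[k]) z‖ * Real.log (2 / (1 - ‖z‖))
      = (1 - ‖z‖ ^ 2) * Real.log (2 / (1 - ‖z‖)) * ‖deriv (φ^[k]) z‖ := by ring
    _ ≤ ‖deriv φ 0‖ ^ k * ((1 - ‖φ^[k] z‖ ^ 2) * Real.log (2 / (1 - ‖φ^[k] z‖))) := hiter
    _ ≤ ‖deriv φ 0‖ ^ k * 4 := by gcongr
    _ = 4 * ‖deriv φ 0‖ ^ k := mul_comm _ _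

/-- Iterated derivative estimate with logarithmic weight. -/
theorem iterate_deriv_log_estimate (φ : ℂ → ℂ)
    (hφmap : Set.MapsTo φ (ball (0 : ℂ) 1) (ball (0 : ℂ) 1))
    (hφ : DifferentiableOn ℂ φ (ball (0 : ℂ) 1))
    (hφ0 : φ 0 = 0)
    (hd0 : 0 < ‖deriv φ 0‖) (hd1 : ‖deriv φ 0‖ < 1)
    (hcond : ∀ z ∈ ball (0 : ℂ) 1,
      (1 - ‖z‖ ^ 2) * Real.log (2 / (1 - ‖z‖)) *
        ‖deriv φ z‖ ≤
      ‖deriv φ 0‖ * ((1 - ‖φ z‖ ^ 2) *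
        Real.log (2 / (1 - ‖φ z‖)))) :
    ∀ k : ℕ, 0 < k → ∀ z ∈ ball (0 : ℂ) 1,
      (1 - ‖z‖ ^ 2) * ‖deriv (φ^[k]) z‖ *
        Real.log (2 / (1 - ‖z‖)) ≤
      4 * ‖deriv φ 0‖ ^ k :=
  iterate_deriv_log_estimate_general φ hφmap hφ hcond
end

section
/- For t ∈ (0,1), define the lens map φ_t(z) = (γ(z)^t − 1)/(γ(z)^t + 1) where γ(z) = (1+z)/(1−z). Then φ_t is a holomorphic self-map of the unit disk with φ_t(0) = 0, φ_t'(0) = t, and its hyperbolic derivative satisfies |φ_t^{(h)}(z)| = (1−|z|²)|φ_t'(z)|/(1−|φ_t(z)|²) ≤ t for all z ∈ D, with equality exactly when z is real. -/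
open Metric

/-- The Cayley transform onto the right half-plane. -/
noncomputable def cayley (z : ℂ) : ℂ := (1 + z) / (1 - z)

/-- The lens map `φ_t`. -/
noncomputable def lens (t : ℝ) (z : ℂ) : ℂ :=
  (cayley z ^ (t : ℂ) - 1) / (cayley z ^ (t : ℂ) + 1)

/-!
Write `w = cayley z = r e^{iθ}` (`|θ| < π/2`) and `u = w^t`, so that `z = (w - 1)/(w + 1)` and
`φ_t z = (u - 1)/(u + 1)`. The identity `1 - |(u - 1)/(u + 1)|² = 4 Re u / |u + 1|²` and the
chain rule turn the hyperbolic derivative into `t r^{t-1} Re w / Re u = t cos θ / cos (tθ)`.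
Since `cos` is even and strictly decreasing on `[0, π]`, `cos θ ≤ cos (tθ)` with equality only
for `θ = 0`, i.e. only when `w`, equivalently `z`, is real.
-/

open Real
open Complex hiding cos

namespace Real

variable {t θ : ℝ}

lemma cos_le_cos_mul (ht0 : 0 ≤ t) (ht1 : t ≤ 1) (hθ : |θ| ≤ π) : cos θ ≤ cos (t * θ) := by
  rw [← cos_abs θ, ← cos_abs (t * θ), abs_mul, abs_of_nonneg ht0]
  exact cos_le_cos_of_nonneg_of_le_pi (by positivity) hθ
    (mul_le_of_le_one_left (abs_nonneg θ) ht1)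

lemma cos_lt_cos_mul (ht0 : 0 ≤ t) (ht1 : t < 1) (hθ0 : θ ≠ 0) (hθ : |θ| ≤ π) :
    cos θ < cos (t * θ) := by
  rw [← cos_abs θ, ← cos_abs (t * θ), abs_mul, abs_of_nonneg ht0]
  exact cos_lt_cos_of_nonneg_of_le_pi (by positivity) hθ
    (mul_lt_of_lt_one_left (abs_pos.2 hθ0) ht1)

lemma cos_mul_pos (ht0 : 0 ≤ t) (ht1 : t ≤ 1) (hθ : |θ| < π / 2) : 0 < cos (t * θ) := by
  have htθ : |t * θ| < π / 2 := by
    rw [abs_mul, abs_of_nonneg ht0]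
    exact (mul_le_of_le_one_left (abs_nonneg θ) ht1).trans_lt hθ
  exact cos_pos_of_mem_Ioo (abs_lt.1 htθ)

lemma cos_div_cos_mul_le_one (ht0 : 0 ≤ t) (ht1 : t ≤ 1) (hθ : |θ| < π / 2) :
    cos θ / cos (t * θ) ≤ 1 :=
  (div_le_one (cos_mul_pos ht0 ht1 hθ)).2 (cos_le_cos_mul ht0 ht1 (by linarith [pi_pos]))

lemma cos_div_cos_mul_eq_one_iff (ht0 : 0 ≤ t) (ht1 : t < 1) (hθ : |θ| < π / 2) :
    cos θ / cos (t * θ) = 1 ↔ θ = 0 := by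
  rw [div_eq_one_iff_eq (cos_mul_pos ht0 ht1.le hθ).ne']
  refine ⟨fun h ↦ by_contra fun hθ0 ↦ ?_, fun h ↦ by simp [h]⟩
  exact (cos_lt_cos_mul ht0 ht1 hθ0 (by linarith [pi_pos])).ne h

end Real

namespace Complex

lemma norm_add_one_sq_sub_norm_sub_one_sq (u : ℂ) : ‖u + 1‖ ^ 2 - ‖u - 1‖ ^ 2 = 4 * u.re := by
  simp only [Complex.sq_norm, normSq_apply, add_re, sub_re, add_im, sub_im, one_re, one_im]
  ring

lemma one_sub_norm_sub_one_div_add_one_sq {u : ℂ} (hu : u + 1 ≠ 0) :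
    1 - ‖(u - 1) / (u + 1)‖ ^ 2 = 4 * u.re / ‖u + 1‖ ^ 2 := by
  rw [← norm_add_one_sq_sub_norm_sub_one_sq, norm_div, div_pow, sub_div,
    div_self (pow_ne_zero 2 (norm_ne_zero_iff.2 hu))]

lemma add_one_ne_zero_of_re_pos {u : ℂ} (hu : 0 < u.re) : u + 1 ≠ 0 :=
  ne_zero_of_re_pos (by rw [add_re, one_re]; linarith)

end Complex

section Cayley

variable {z : ℂ}

lemma ne_one_of_mem_ball_zero_one (hz : z ∈ ball (0 : ℂ) 1) : z ≠ 1 := by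
  rintro rfl
  simp at hz

lemma cayley_add_one (hz : z ≠ 1) : cayley z + 1 = 2 / (1 - z) := by
  rw [cayley, div_add_one (sub_ne_zero.2 hz.symm)]
  ring_nf

lemma cayley_add_one_ne_zero (hz : z ≠ 1) : cayley z + 1 ≠ 0 := by
  rw [cayley_add_one hz]
  exact div_ne_zero two_ne_zero (sub_ne_zero.2 hz.symm)

lemma cayley_sub_one_div_cayley_add_one (hz : z ≠ 1) : (cayley z - 1) / (cayley z + 1) = z := by
  have h : (1 : ℂ) - z ≠ 0 := sub_ne_zero.2 hz.symm
  rw [cayley_add_one hz, cayley]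
  field_simp
  ring

lemma one_sub_norm_sq_eq_re_cayley (hz : z ≠ 1) :
    1 - ‖z‖ ^ 2 = 4 * (cayley z).re / ‖cayley z + 1‖ ^ 2 := by
  conv_lhs => rw [← cayley_sub_one_div_cayley_add_one hz]
  exact one_sub_norm_sub_one_div_add_one_sq (cayley_add_one_ne_zero hz)

lemma re_cayley_pos (hz : z ∈ ball (0 : ℂ) 1) : 0 < (cayley z).re := by
  have hz1 := ne_one_of_mem_ball_zero_one hz
  have h : 0 < 1 - ‖z‖ ^ 2 := by
    have := mem_ball_zero_iff.1 hz
    nlinarith [norm_nonneg z]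
  rw [one_sub_norm_sq_eq_re_cayley hz1] at h
  have := norm_pos_iff.2 (cayley_add_one_ne_zero hz1)
  exact pos_of_mul_pos_right (div_pos_iff_of_pos_right (by positivity) |>.1 h) zero_le_four

lemma im_cayley (z : ℂ) : (cayley z).im = 2 * z.im / normSq (1 - z) := by
  rw [cayley, div_im, div_sub_div_same]
  congr 1
  simp only [add_re, sub_re, add_im, sub_im, one_re, one_im]
  ring

lemma arg_cayley_eq_zero_iff (hz : z ∈ ball (0 : ℂ) 1) : arg (cayley z) = 0 ↔ z.im = 0 := by
  have hns : normSq (1 - z) ≠ 0 :=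
    normSq_eq_zero.not.2 (sub_ne_zero.2 (ne_one_of_mem_ball_zero_one hz).symm)
  rw [arg_eq_zero_iff, im_cayley, div_eq_zero_iff, mul_eq_zero, or_iff_left hns]
  simp [(re_cayley_pos hz).le]

lemma hasDerivAt_cayley (hz : z ≠ 1) : HasDerivAt cayley (2 / (1 - z) ^ 2) z := by
  have h : (1 : ℂ) - z ≠ 0 := sub_ne_zero.2 hz.symm
  refine (((hasDerivAt_id z).const_add 1).div ((hasDerivAt_id z).const_sub 1) h).congr_deriv ?_
  simp only [id]
  ring

end Cayley

section Lens

variable {t : ℝ} {z : ℂ}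

lemma lens_zero (t : ℝ) : lens t 0 = 0 := by
  simp [lens, cayley]

lemma re_cayley_cpow_pos (ht0 : 0 ≤ t) (ht1 : t ≤ 1) (hz : z ∈ ball (0 : ℂ) 1) :
    0 < (cayley z ^ (t : ℂ)).re := by
  have hw := re_cayley_pos hz
  rw [cpow_ofReal_re, mul_comm (arg _)]
  exact mul_pos (rpow_pos_of_pos (norm_pos_iff.2 (ne_zero_of_re_pos hw)) _)
    (cos_mul_pos ht0 ht1 (abs_arg_lt_pi_div_two_iff.2 (Or.inl hw)))

lemma cayley_cpow_add_one_ne_zero (ht0 : 0 ≤ t) (ht1 : t ≤ 1) (hz : z ∈ ball (0 : ℂ) 1) :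
    cayley z ^ (t : ℂ) + 1 ≠ 0 :=
  add_one_ne_zero_of_re_pos (re_cayley_cpow_pos ht0 ht1 hz)

lemma one_sub_norm_lens_sq (ht0 : 0 ≤ t) (ht1 : t ≤ 1) (hz : z ∈ ball (0 : ℂ) 1) :
    1 - ‖lens t z‖ ^ 2 = 4 * (cayley z ^ (t : ℂ)).re / ‖cayley z ^ (t : ℂ) + 1‖ ^ 2 :=
  one_sub_norm_sub_one_div_add_one_sq (cayley_cpow_add_one_ne_zero ht0 ht1 hz)

lemma norm_lens_lt_one (ht0 : 0 ≤ t) (ht1 : t ≤ 1) (hz : z ∈ ball (0 : ℂ) 1) :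
    ‖lens t z‖ < 1 := by
  have h : 0 < 1 - ‖lens t z‖ ^ 2 := by
    rw [one_sub_norm_lens_sq ht0 ht1 hz]
    have := re_cayley_cpow_pos ht0 ht1 hz
    have := norm_pos_iff.2 (cayley_cpow_add_one_ne_zero ht0 ht1 hz)
    positivity
  nlinarith [norm_nonneg (lens t z)]

lemma hasDerivAt_lens (hz : z ≠ 1) (hw : cayley z ∈ slitPlane)
    (hu : cayley z ^ (t : ℂ) + 1 ≠ 0) :
    HasDerivAt (lens t)
      (t * cayley z ^ ((t : ℂ) - 1) * (cayley z + 1) ^ 2 / (cayley z ^ (t : ℂ) + 1) ^ 2) z := by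
  have hpow := (hasDerivAt_cayley hz).cpow_const (c := (t : ℂ)) hw
  refine ((hpow.sub_const 1).div (hpow.add_const 1) hu).congr_deriv ?_
  have h : (1 : ℂ) - z ≠ 0 := sub_ne_zero.2 hz.symm
  rw [cayley_add_one hz]
  field_simp
  ring

lemma deriv_lens_zero (t : ℝ) : deriv (lens t) 0 = t := by
  have hc : cayley 0 = 1 := by simp [cayley]
  have hu : cayley 0 ^ (t : ℂ) + 1 ≠ 0 := by rw [hc, one_cpow]; norm_num
  rw [(hasDerivAt_lens zero_ne_one (by simp [hc]) hu).deriv, hc, one_cpow, one_cpow]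
  norm_num

lemma norm_deriv_lens (ht0 : 0 ≤ t) (ht1 : t ≤ 1) (hz : z ∈ ball (0 : ℂ) 1) :
    ‖deriv (lens t) z‖ =
      t * ‖cayley z‖ ^ (t - 1) * ‖cayley z + 1‖ ^ 2 / ‖cayley z ^ (t : ℂ) + 1‖ ^ 2 := by
  have hderiv := hasDerivAt_lens (t := t) (ne_one_of_mem_ball_zero_one hz)
    (Or.inl (re_cayley_pos hz)) (cayley_cpow_add_one_ne_zero ht0 ht1 hz)
  rw [hderiv.deriv, norm_div, norm_mul, norm_mul, norm_pow, norm_pow, norm_real,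
    Real.norm_of_nonneg ht0, ← ofReal_one, ← ofReal_sub, norm_cpow_real]

lemma one_sub_norm_sq_mul_norm_deriv_lens (ht0 : 0 ≤ t) (ht1 : t ≤ 1)
    (hz : z ∈ ball (0 : ℂ) 1) :
    (1 - ‖z‖ ^ 2) * ‖deriv (lens t) z‖ =
      t * (1 - ‖lens t z‖ ^ 2) * (cos (arg (cayley z)) / cos (t * arg (cayley z))) := by
  have hw := re_cayley_pos hz
  have hr : ‖cayley z‖ ≠ 0 := norm_ne_zero_iff.2 (ne_zero_of_re_pos hw)
  have hw1 := norm_pos_iff.2 (cayley_add_one_ne_zero (ne_one_of_mem_ball_zero_one hz))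
  have hcos := cos_mul_pos ht0 ht1 (abs_arg_lt_pi_div_two_iff.2 (Or.inl hw))
  rw [one_sub_norm_sq_eq_re_cayley (ne_one_of_mem_ball_zero_one hz), norm_deriv_lens ht0 ht1 hz,
    one_sub_norm_lens_sq ht0 ht1 hz, cpow_ofReal_re, ← norm_mul_cos_arg (cayley z),
    rpow_sub_one hr]
  field_simp

end Lens

/-- Properties of the lens maps: `φ_t` is a holomorphic self-map of the disk fixing `0`,
with `φ_t'(0) = t`, and its hyperbolic derivative is at most `t`, with equality
precisely on the real diameter. -/
theorem lens_map_properties (t : ℝ) (ht0 : 0 < t) (ht1 : t < 1) :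
    Set.MapsTo (lens t) (ball (0 : ℂ) 1) (ball (0 : ℂ) 1) ∧
    DifferentiableOn ℂ (lens t) (ball (0 : ℂ) 1) ∧
    lens t 0 = 0 ∧
    deriv (lens t) 0 = (t : ℂ) ∧
    (∀ z ∈ ball (0 : ℂ) 1,
      (1 - ‖z‖ ^ 2) * ‖deriv (lens t) z‖ ≤
        t * (1 - ‖lens t z‖ ^ 2)) ∧
    (∀ z ∈ ball (0 : ℂ) 1,
      ((1 - ‖z‖ ^ 2) * ‖deriv (lens t) z‖ =
        t * (1 - ‖lens t z‖ ^ 2) ↔ z.im = 0)) := by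
  have harg (z : ℂ) (hz : z ∈ ball (0 : ℂ) 1) : |arg (cayley z)| < π / 2 :=
    abs_arg_lt_pi_div_two_iff.2 (Or.inl (re_cayley_pos hz))
  have hpos (z : ℂ) (hz : z ∈ ball (0 : ℂ) 1) : 0 < t * (1 - ‖lens t z‖ ^ 2) := by
    have := norm_lens_lt_one ht0.le ht1.le hz
    have := norm_nonneg (lens t z)
    exact mul_pos ht0 (by nlinarith)
  refine ⟨fun z hz ↦ mem_ball_zero_iff.2 (norm_lens_lt_one ht0.le ht1.le hz),
    fun z hz ↦ ?_, lens_zero t, deriv_lens_zero t, fun z hz ↦ ?_, fun z hz ↦ ?_⟩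
  · exact (hasDerivAt_lens (ne_one_of_mem_ball_zero_one hz) (Or.inl (re_cayley_pos hz))
      (cayley_cpow_add_one_ne_zero ht0.le ht1.le hz)).differentiableAt.differentiableWithinAt
  · rw [one_sub_norm_sq_mul_norm_deriv_lens ht0.le ht1.le hz]
    exact mul_le_of_le_one_right (hpos z hz).le (cos_div_cos_mul_le_one ht0.le ht1.le (harg z hz))
  · rw [one_sub_norm_sq_mul_norm_deriv_lens ht0.le ht1.le hz, mul_eq_left₀ (hpos z hz).ne',
      cos_div_cos_mul_eq_one_iff ht0.le ht1 (harg z hz), arg_cayley_eq_zero_iff hz]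
end

section
/- Let φ be a holomorphic self-map of the unit disk with φ(0)=0 and 0<|φ'(0)|<1, such that the hyperbolic derivative satisfies |φ^{(h)}(z)| = (1−|z|²)|φ'(z)|/(1−|φ(z)|²) ≤ |φ'(0)| for all z ∈ D. Then the Königs function σ of φ satisfies (1−|z|²)|σ'(z)| ≤ 1 for all z ∈ D, i.e. σ is in the Bloch space with Bloch seminorm at most 1. -/
/-!
The bound `(1 - |z|²) |f'(z)| ≤ c (1 - |f z|²)` is multiplicative under composition by the chain
rule, so the `k`-th iterate of `φ` satisfies it with `c = |φ'(0)|ᵏ`. Dividing by `φ'(0)ᵏ` gives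
`(1 - |z|²) |(φₖ / φ'(0)ᵏ)'(z)| ≤ 1 - |φₖ(z)|² ≤ 1`, and by Weierstrass' theorem the derivatives
of the normalized iterates converge to `σ'`, so the bound passes to the limit.
-/

open Metric Filter Topology

section HyperbolicDerivative

variable {𝕜 : Type*} [NontriviallyNormedField 𝕜]

theorem hyperbolicDeriv_comp_le {f g : 𝕜 → 𝕜} {z : 𝕜} {a b : ℝ}
    (hf : DifferentiableAt 𝕜 f z) (hg : DifferentiableAt 𝕜 g (f z)) (ha : 0 ≤ a)
    (hfz : (1 - ‖z‖ ^ 2) * ‖deriv f z‖ ≤ a * (1 - ‖f z‖ ^ 2))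
    (hgz : (1 - ‖f z‖ ^ 2) * ‖deriv g (f z)‖ ≤ b * (1 - ‖g (f z)‖ ^ 2)) :
    (1 - ‖z‖ ^ 2) * ‖deriv (g ∘ f) z‖ ≤ a * b * (1 - ‖(g ∘ f) z‖ ^ 2) := by
  rw [deriv_comp z hg hf, norm_mul, Function.comp_apply]
  calc (1 - ‖z‖ ^ 2) * (‖deriv g (f z)‖ * ‖deriv f z‖)
      = ‖deriv g (f z)‖ * ((1 - ‖z‖ ^ 2) * ‖deriv f z‖) := by ring
    _ ≤ ‖deriv g (f z)‖ * (a * (1 - ‖f z‖ ^ 2)) := by gcongr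
    _ = a * ((1 - ‖f z‖ ^ 2) * ‖deriv g (f z)‖) := by ring
    _ ≤ a * (b * (1 - ‖g (f z)‖ ^ 2)) := by gcongr
    _ = a * b * (1 - ‖g (f z)‖ ^ 2) := by ring

variable {φ : 𝕜 → 𝕜} {c : ℝ}

theorem hyperbolicDeriv_iterate_le (hmap : Set.MapsTo φ (ball 0 1) (ball 0 1))
    (hφ : DifferentiableOn 𝕜 φ (ball 0 1)) (hc : 0 ≤ c)
    (hhyp : ∀ z ∈ ball (0 : 𝕜) 1, (1 - ‖z‖ ^ 2) * ‖deriv φ z‖ ≤ c * (1 - ‖φ z‖ ^ 2))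
    (k : ℕ) :
    ∀ z ∈ ball (0 : 𝕜) 1, (1 - ‖z‖ ^ 2) * ‖deriv φ^[k] z‖ ≤ c ^ k * (1 - ‖φ^[k] z‖ ^ 2) := by
  induction k with
  | zero => simp
  | succ k ih =>
    intro z hz
    have hφz : φ z ∈ ball (0 : 𝕜) 1 := hmap hz
    rw [Function.iterate_succ, pow_succ' c k]
    exact hyperbolicDeriv_comp_le (hφ.differentiableAt (isOpen_ball.mem_nhds hz))
      ((hφ.iterate hmap k).differentiableAt (isOpen_ball.mem_nhds hφz)) hc
      (hhyp z hz) (ih (φ z) hφz)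

theorem blochBound_iterate_div_pow (hmap : Set.MapsTo φ (ball 0 1) (ball 0 1))
    (hφ : DifferentiableOn 𝕜 φ (ball 0 1)) (hd0 : 0 < ‖deriv φ 0‖)
    (hhyp : ∀ z ∈ ball (0 : 𝕜) 1,
      (1 - ‖z‖ ^ 2) * ‖deriv φ z‖ ≤ ‖deriv φ 0‖ * (1 - ‖φ z‖ ^ 2))
    (k : ℕ) {z : 𝕜} (hz : z ∈ ball (0 : 𝕜) 1) :
    (1 - ‖z‖ ^ 2) * ‖deriv (fun w => φ^[k] w / deriv φ 0 ^ k) z‖ ≤ 1 := by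
  have hpow : 0 < ‖deriv φ 0‖ ^ k := pow_pos hd0 k
  rw [deriv_div_const, norm_div, norm_pow, ← mul_div_assoc, div_le_one hpow]
  calc (1 - ‖z‖ ^ 2) * ‖deriv φ^[k] z‖
      ≤ ‖deriv φ 0‖ ^ k * (1 - ‖φ^[k] z‖ ^ 2) :=
        hyperbolicDeriv_iterate_le hmap hφ hd0.le hhyp k z hz
    _ ≤ ‖deriv φ 0‖ ^ k := mul_le_of_le_one_right hpow.le (sub_le_self _ (sq_nonneg _))

end HyperbolicDerivative

theorem TendstoLocallyUniformlyOn.mul_norm_deriv_le {ι : Type*} {l : Filter ι} [l.NeBot]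
    {F : ι → ℂ → ℂ} {f : ℂ → ℂ} {U : Set ℂ} {z : ℂ} {a C : ℝ}
    (hFf : TendstoLocallyUniformlyOn F f l U) (hF : ∀ i, DifferentiableOn ℂ (F i) U)
    (hU : IsOpen U) (hz : z ∈ U) (hbound : ∀ i, a * ‖_root_.deriv (F i) z‖ ≤ C) :
    a * ‖_root_.deriv f z‖ ≤ C := by
  have hderiv : Tendsto (fun i => _root_.deriv (F i) z) l (𝓝 (_root_.deriv f z)) :=
    (hFf.deriv (Eventually.of_forall hF) hU).tendsto_at hz
  exact le_of_tendsto' (hderiv.norm.const_mul a) hbound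

theorem koenigs_bloch_seminorm_le_one_general (φ σ : ℂ → ℂ)
    (hφmap : Set.MapsTo φ (ball (0 : ℂ) 1) (ball (0 : ℂ) 1))
    (hφ : DifferentiableOn ℂ φ (ball (0 : ℂ) 1))
    (hd0 : 0 < ‖deriv φ 0‖)
    (hhyp : ∀ z ∈ ball (0 : ℂ) 1,
      (1 - ‖z‖ ^ 2) * ‖deriv φ z‖ ≤
        ‖deriv φ 0‖ * (1 - ‖φ z‖ ^ 2))
    (hkoenigs : TendstoLocallyUniformlyOn
      (fun (k : ℕ) (z : ℂ) => φ^[k] z / (deriv φ 0) ^ k) σ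
      Filter.atTop (ball (0 : ℂ) 1)) :
    ∀ z ∈ ball (0 : ℂ) 1,
      (1 - ‖z‖ ^ 2) * ‖deriv σ z‖ ≤ 1 := fun _ hz =>
  hkoenigs.mul_norm_deriv_le (fun k => (hφ.iterate hφmap k).div_const _) isOpen_ball hz
    fun k => blochBound_iterate_div_pow hφmap hφ hd0 hhyp k hz

/-- If the hyperbolic derivative of `φ` is bounded by `|φ'(0)|`, the Königs function
of `φ` lies in the Bloch space with seminorm at most `1`. -/
theorem koenigs_bloch_seminorm_le_one (φ σ : ℂ → ℂ)
    (hφmap : Set.MapsTo φ (ball (0 : ℂ) 1) (ball (0 : ℂ) 1))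
    (hφ : DifferentiableOn ℂ φ (ball (0 : ℂ) 1))
    (hφ0 : φ 0 = 0)
    (hd0 : 0 < ‖deriv φ 0‖) (hd1 : ‖deriv φ 0‖ < 1)
    (hhyp : ∀ z ∈ ball (0 : ℂ) 1,
      (1 - ‖z‖ ^ 2) * ‖deriv φ z‖ ≤
        ‖deriv φ 0‖ * (1 - ‖φ z‖ ^ 2))
    (hσ : DifferentiableOn ℂ σ (ball (0 : ℂ) 1))
    (hkoenigs : TendstoLocallyUniformlyOn
      (fun (k : ℕ) (z : ℂ) => φ^[k] z / (deriv φ 0) ^ k) σ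
      Filter.atTop (ball (0 : ℂ) 1)) :
    ∀ z ∈ ball (0 : ℂ) 1,
      (1 - ‖z‖ ^ 2) * ‖deriv σ z‖ ≤ 1 :=
  koenigs_bloch_seminorm_le_one_general φ σ hφmap hφ hd0 hhyp hkoenigs
end
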